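/- arXiv:2605.12668 — 3 statements merged into one kernel-verified Lean document; each statement's English description precedes it below -/
import Mathlib

section
/- The KL projection onto the truncated simplex has the explicit form wᵢ* = max{μ, c·w̃ᵢ}: if w* minimizes Σᵢ wᵢ log(wᵢ/w̃ᵢ) over {w : wᵢ ≥ μ, Σᵢ wᵢ = 1}, then there exists a constant c > 0 such that wᵢ* = max{μ, c·w̃ᵢ} for every i, and c satisfies Σᵢ max{μ, c·w̃ᵢ} = 1. -/
/-!
Moving mass `t` from a coordinate `i` with `w*ᵢ > μ` to any other coordinate `j` keeps the point
in `Δ` for small `t > 0`, so at the minimizer the derivative of `D(· ‖ w̃)` in the direction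
`eⱼ - eᵢ` is nonnegative, i.e. `log (w*ᵢ / w̃ᵢ) ≤ log (w*ⱼ / w̃ⱼ)`. Hence every coordinate above `μ`
has the same, minimal, ratio `c = w*ᵢ / w̃ᵢ`, and every coordinate at `μ` has `c w̃ⱼ ≤ μ`.
Since `n μ < 1`, some coordinate lies above `μ`.
-/

open Finset Filter Real

variable {ι : Type*}

theorem eq_max_of_forall_div_le {μ : ℝ} {w wt : ι → ℝ} (hwt : ∀ k, 0 < wt k)
    (hge : ∀ k, μ ≤ w k) (hratio : ∀ i, μ < w i → ∀ j, w i / wt i ≤ w j / wt j)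
    {i₀ : ι} (hi₀ : μ < w i₀) (k : ι) : w k = max μ (w i₀ / wt i₀ * wt k) := by
  rcases (hge k).lt_or_eq with hk | hk
  · have hc : w k / wt k = w i₀ / wt i₀ := le_antisymm (hratio k hk i₀) (hratio i₀ hi₀ k)
    rw [← hc, div_mul_cancel₀ _ (hwt k).ne', max_eq_right hk.le]
  · have hc : w i₀ / wt i₀ ≤ μ / wt k := hk ▸ hratio i₀ hi₀ k
    rw [← hk, max_eq_left ((le_div_iff₀ (hwt k)).1 hc)]

variable [Fintype ι]

def truncatedSimplex (ι : Type*) [Fintype ι] (μ : ℝ) : Set (ι → ℝ) :=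
  {v | (∀ k, μ ≤ v k) ∧ ∑ k, v k = 1}

noncomputable def klDiv (v wt : ι → ℝ) : ℝ := ∑ k, v k * log (v k / wt k)

theorem hasDerivAt_mul_log_div {x p : ℝ} (hx : x ≠ 0) (hp : p ≠ 0) :
    HasDerivAt (fun x => x * log (x / p)) (log (x / p) + 1) x := by
  have hlog := ((hasDerivAt_id' x).div_const p).log (div_ne_zero hx hp)
  refine ((hasDerivAt_id' x).mul hlog).congr_deriv ?_
  field_simp

theorem hasFDerivAt_klDiv {w wt : ι → ℝ} (hw : ∀ k, w k ≠ 0) (hwt : ∀ k, wt k ≠ 0) :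
    HasFDerivAt (klDiv · wt)
      (∑ k, (log (w k / wt k) + 1) • ContinuousLinearMap.proj (R := ℝ) (φ := fun _ : ι => ℝ) k)
      w := by
  refine HasFDerivAt.fun_sum fun k _ => ?_
  have hproj : HasFDerivAt (fun v : ι → ℝ => v k)
      (ContinuousLinearMap.proj (R := ℝ) (φ := fun _ : ι => ℝ) k) w :=
    hasFDerivAt_apply k w
  exact (hasDerivAt_mul_log_div (hw k) (hwt k)).comp_hasFDerivAt w hproj

theorem exists_lt_of_mem_truncatedSimplex {μ : ℝ} (hμ : μ < 1 / Fintype.card ι) {w : ι → ℝ}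
    (hw : w ∈ truncatedSimplex ι μ) : ∃ i, μ < w i := by
  have hcard : Fintype.card ι * μ < 1 := by
    rcases (Fintype.card ι).eq_zero_or_pos with h | h
    · simp [h]
    · rw [mul_comm]
      exact (lt_div_iff₀ (by exact_mod_cast h)).1 hμ
  obtain ⟨i, -, hi⟩ := exists_lt_of_sum_lt (s := univ) (f := fun _ => μ) (g := w) <| by
    simpa [hw.2] using hcard
  exact ⟨i, hi⟩

variable [DecidableEq ι]

theorem single_sub_single_mem_posTangentConeAt {μ : ℝ} {w : ι → ℝ}
    (hw : w ∈ truncatedSimplex ι μ) {i j : ι} (hij : i ≠ j) (hi : μ < w i) :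
    Pi.single j 1 - Pi.single i 1 ∈ posTangentConeAt (truncatedSimplex ι μ) w := by
  apply mem_posTangentConeAt_of_frequently_mem
  refine Eventually.frequently ?_
  filter_upwards [Ioo_mem_nhdsGT (sub_pos.2 hi)] with t ht
  refine ⟨fun k => ?_, ?_⟩
  · rcases eq_or_ne k i with rfl | hki
    · simpa [hij] using (by linarith [ht.2] : μ + t ≤ w k)
    · rcases eq_or_ne k j with rfl | hkj
      · simpa [hki] using (by linarith [ht.1, hw.1 k] : μ ≤ w k + t)
      · simpa [hki, hkj] using hw.1 k
  · simp [sum_add_distrib, ← mul_sum, sum_sub_distrib, hw.2]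

theorem div_le_div_of_isMinOn_klDiv {μ : ℝ} (hμ : 0 < μ) {w wt : ι → ℝ} (hwt : ∀ k, 0 < wt k)
    (hmin : IsMinOn (klDiv · wt) (truncatedSimplex ι μ) w) (hw : w ∈ truncatedSimplex ι μ)
    {i : ι} (hi : μ < w i) (j : ι) : w i / wt i ≤ w j / wt j := by
  rcases eq_or_ne i j with rfl | hij
  · rfl
  have hpos : ∀ k, 0 < w k := fun k => hμ.trans_le (hw.1 k)
  have hdir := hmin.localize.hasFDerivWithinAt_nonneg
    (hasFDerivAt_klDiv (fun k => (hpos k).ne') (fun k => (hwt k).ne')).hasFDerivWithinAt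
    (single_sub_single_mem_posTangentConeAt hw hij hi)
  rw [← log_le_log_iff (div_pos (hpos i) (hwt i)) (div_pos (hpos j) (hwt j))]
  simpa [Pi.single_apply, mul_sub, sum_sub_distrib] using hdir

theorem kl_projection_explicit_form_general (n : ℕ) (μ : ℝ) (hμ : 0 < μ)
    (hμn : μ < 1 / n) (wt : Fin n → ℝ) (hwt : ∀ i, 0 < wt i) (wstar : Fin n → ℝ)
    (hmem : (∀ i, μ ≤ wstar i) ∧ ∑ i, wstar i = 1)
    (hmin : ∀ v : Fin n → ℝ, (∀ i, μ ≤ v i) → ∑ i, v i = 1 →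
      ∑ i, wstar i * Real.log (wstar i / wt i) ≤ ∑ i, v i * Real.log (v i / wt i)) :
    ∃ c : ℝ, 0 < c ∧ (∀ i, wstar i = max μ (c * wt i)) ∧
      ∑ i, max μ (c * wt i) = 1 := by
  have hminOn : IsMinOn (klDiv · wt) (truncatedSimplex (Fin n) μ) wstar :=
    fun v hv => hmin v hv.1 hv.2
  obtain ⟨i₀, hi₀⟩ := exists_lt_of_mem_truncatedSimplex (by simpa using hμn) hmem
  have hform := eq_max_of_forall_div_le hwt hmem.1
    (fun _ hi => div_le_div_of_isMinOn_klDiv hμ hwt hminOn hmem hi) hi₀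
  refine ⟨wstar i₀ / wt i₀, div_pos (hμ.trans hi₀) (hwt i₀), hform, ?_⟩
  simpa only [← hform] using hmem.2

/-- The KL projection onto the truncated simplex has the explicit form
`wᵢ* = max {μ, c · w̃ᵢ}`. -/
theorem kl_projection_explicit_form (n : ℕ) (hn : 1 ≤ n) (μ : ℝ) (hμ : 0 < μ)
    (hμn : μ < 1 / n) (wt : Fin n → ℝ) (hwt : ∀ i, 0 < wt i) (wstar : Fin n → ℝ)
    (hmem : (∀ i, μ ≤ wstar i) ∧ ∑ i, wstar i = 1)
    (hmin : ∀ v : Fin n → ℝ, (∀ i, μ ≤ v i) → ∑ i, v i = 1 →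
      ∑ i, wstar i * Real.log (wstar i / wt i) ≤ ∑ i, v i * Real.log (v i / wt i)) :
    ∃ c : ℝ, 0 < c ∧ (∀ i, wstar i = max μ (c * wt i)) ∧
      ∑ i, max μ (c * wt i) = 1 :=
  kl_projection_explicit_form_general n μ hμ hμn wt hwt wstar hmem hmin
end

section
/- Lipschitz continuity of KL divergence in its first argument on the truncated simplex: for any u, v, w in the truncated simplex Δμ = {x ∈ ℝⁿ : xᵢ ≥ μ, Σᵢ xᵢ = 1}, one has D(u‖w) − D(v‖w) ≤ (1 + log(1/μ))·‖u − v‖₁. -/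
open Finset

lemma kl_aux_convex (u v w : ℝ) (hu : 0 < u) (hv : 0 < v) (hw : 0 < w) :
    u * Real.log (u / w) - v * Real.log (v / w) ≤ (Real.log (u / w) + 1) * (u - v) := by
  have h1 : Real.log (u / v) ≤ u / v - 1 := Real.log_le_sub_one_of_pos (by positivity)
  have hlog1 : Real.log (u / v) = Real.log u - Real.log v := Real.log_div hu.ne' hv.ne'
  have hlog2 : Real.log (u / w) = Real.log u - Real.log w := Real.log_div hu.ne' hw.ne'
  have hlog3 : Real.log (v / w) = Real.log v - Real.log w := Real.log_div hv.ne' hw.ne'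
  have h2 : v * Real.log (u / v) ≤ v * (u / v - 1) := by
    exact mul_le_mul_of_nonneg_left h1 hv.le
  have h3 : v * (u / v - 1) = u - v := by field_simp
  rw [hlog1] at h2
  rw [hlog2, hlog3]
  nlinarith [h2, h3]

/-- Lipschitz continuity of the KL divergence in its first argument on the
truncated simplex. -/
theorem kl_lipschitz_first_arg (n : ℕ) (hn : 1 ≤ n) (μ : ℝ) (hμ : 0 < μ)
    (hμn : μ < 1 / n) (u v w : Fin n → ℝ)
    (hu : (∀ i, μ ≤ u i) ∧ ∑ i, u i = 1)
    (hv : (∀ i, μ ≤ v i) ∧ ∑ i, v i = 1)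
    (hw : (∀ i, μ ≤ w i) ∧ ∑ i, w i = 1) :
    (∑ i, u i * Real.log (u i / w i)) - (∑ i, v i * Real.log (v i / w i)) ≤
      (1 + Real.log (1 / μ)) * ∑ i, |u i - v i| := by
  obtain ⟨hul, hus⟩ := hu
  obtain ⟨hvl, hvs⟩ := hv
  obtain ⟨hwl, hws⟩ := hw
  have hμ1 : μ < 1 := by
    calc μ < 1 / n := hμn
    _ ≤ 1 := by
      rw [div_le_one (by exact_mod_cast hn)]
      exact_mod_cast hn
  have hub : ∀ i, u i ≤ 1 := fun i => by
    calc u i ≤ ∑ j, u j :=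
          Finset.single_le_sum (fun j _ => le_trans hμ.le (hul j)) (mem_univ i)
      _ = 1 := hus
  have hwb : ∀ i, w i ≤ 1 := fun i => by
    calc w i ≤ ∑ j, w j :=
          Finset.single_le_sum (fun j _ => le_trans hμ.le (hwl j)) (mem_univ i)
      _ = 1 := hws
  rw [← Finset.sum_sub_distrib, Finset.mul_sum]
  apply Finset.sum_le_sum
  intro i _
  have hui : 0 < u i := lt_of_lt_of_le hμ (hul i)
  have hvi : 0 < v i := lt_of_lt_of_le hμ (hvl i)
  have hwi : 0 < w i := lt_of_lt_of_le hμ (hwl i)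
  calc u i * Real.log (u i / w i) - v i * Real.log (v i / w i)
      ≤ (Real.log (u i / w i) + 1) * (u i - v i) :=
        kl_aux_convex (u i) (v i) (w i) hui hvi hwi
    _ ≤ |Real.log (u i / w i) + 1| * |u i - v i| := by
        rw [← abs_mul]; exact le_abs_self _
    _ ≤ (1 + Real.log (1 / μ)) * |u i - v i| := by
        apply mul_le_mul_of_nonneg_right _ (abs_nonneg _)
        rw [abs_le]
        have hlogμ : Real.log (1 / μ) = -Real.log μ := by
          rw [one_div, Real.log_inv]
        constructor
        · have : μ ≤ u i / w i := by
            rw [le_div_iff₀ hwi]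
            calc μ * w i ≤ μ * 1 := by nlinarith [hwb i]
              _ = μ := mul_one μ
              _ ≤ u i := hul i
          have := Real.log_le_log hμ this
          rw [hlogμ]; linarith
        · have : u i / w i ≤ 1 / μ := by
            rw [div_le_div_iff₀ hwi hμ]
            nlinarith [hub i, hwl i]
          have := Real.log_le_log (by positivity) this
          linarith
end

section
/- Dynamic regret bound for projected exponentiated gradient: let g₁,…,g_T be convex functions on Δμ with ‖∇g_t‖_∞ ≤ G, w₁ the uniform vector, and w_{t+1} the KL projection onto Δμ of the exponentiated gradient update w_{t,i}·exp(−η(∇g_t)ᵢ). Then for any comparator sequence w₁*,…,w_T* in Δμ, Σ_t g_t(w_t) − Σ_t g_t(w_t*) ≤ (1+log(1/μ))/η · (1 + Σ_{t=1}^{T−1} ‖w_{t+1}* − w_t*‖₁) + ηG²T. -/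
open Finset

section EGAux
open Real

lemma log_ge_aux {t : ℝ} (ht : 1 ≤ t) : 2*(t-1)/(t+1) ≤ Real.log t := by
  have h0 : (0:ℝ) < t := lt_of_lt_of_le one_pos ht
  set f : ℝ → ℝ := fun x => Real.log x - (2 - 4/(x+1)) with hf
  have hderiv : ∀ x ∈ Set.Ioi (1:ℝ), HasDerivAt f (1/x - 4/(x+1)^2) x := by
    intro x hx
    have hx0 : (0:ℝ) < x := lt_trans one_pos hx
    have h1 : HasDerivAt (fun y : ℝ => y + 1) 1 x := (hasDerivAt_id x).add_const 1
    have h2 : HasDerivAt (fun y : ℝ => 4/(y+1)) ((0*(x+1) - 4*1)/(x+1)^2) x :=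
      (hasDerivAt_const x (4:ℝ)).div h1 (by positivity)
    have hl : HasDerivAt Real.log (1/x) x := by
      simpa [one_div] using Real.hasDerivAt_log (ne_of_gt hx0)
    have h3 := hl.sub ((hasDerivAt_const x (2:ℝ)).sub h2)
    exact h3.congr_deriv (by ring)
  have hmono : MonotoneOn f (Set.Ici 1) := by
    apply monotoneOn_of_deriv_nonneg (convex_Ici 1)
    · apply ContinuousOn.sub
      · exact fun x hx => (Real.continuousAt_log
          (by simp only [Set.mem_Ici] at hx; positivity)).continuousWithinAt
      · apply ContinuousOn.sub continuousOn_const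
        apply ContinuousOn.div continuousOn_const (by fun_prop)
        intro x hx
        simp only [Set.mem_Ici] at hx
        intro h; linarith
    · intro x hx
      rw [interior_Ici] at hx
      exact ((hderiv x hx).differentiableAt).differentiableWithinAt
    · intro x hx
      rw [interior_Ici] at hx
      rw [(hderiv x hx).deriv]
      have hx0 : (0:ℝ) < x := lt_trans one_pos hx
      have heq : 1/x - 4/(x+1)^2 = (x-1)^2/(x*(x+1)^2) := by
        field_simp; ring
      rw [heq]; positivity
  have hle := hmono (Set.mem_Ici.mpr le_rfl) (Set.mem_Ici.mpr ht) ht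
  have hval : f 1 = 0 := by simp [hf]; norm_num
  rw [hval] at hle
  have heq : 2*(t-1)/(t+1) = 2 - 4/(t+1) := by field_simp; ring
  rw [heq]
  simp only [hf, sub_nonneg] at hle
  linarith

lemma log_le_aux {s : ℝ} (hs : 1 ≤ s) : Real.log s ≤ (s - 1/s)/2 := by
  have h0 : (0:ℝ) < s := lt_of_lt_of_le one_pos hs
  set f : ℝ → ℝ := fun x => (x - 1/x)/2 - Real.log x with hf
  have hderiv : ∀ x ∈ Set.Ioi (1:ℝ), HasDerivAt f ((1 - (0*x - 1*1)/x^2)/2 - 1/x) x := by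
    intro x hx
    have hx0 : (0:ℝ) < x := lt_trans one_pos hx
    have h1 : HasDerivAt (fun y : ℝ => 1/y) ((0*x - 1*1)/x^2) x :=
      (hasDerivAt_const x (1:ℝ)).div (hasDerivAt_id x) (ne_of_gt hx0)
    have h2 : HasDerivAt (fun y : ℝ => (y - 1/y)/2) ((1 - (0*x - 1*1)/x^2)/2) x :=
      ((hasDerivAt_id x).sub h1).div_const 2
    have hl : HasDerivAt Real.log (1/x) x := by
      simpa [one_div] using Real.hasDerivAt_log (ne_of_gt hx0)
    exact h2.sub hl
  have hmono : MonotoneOn f (Set.Ici 1) := by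
    apply monotoneOn_of_deriv_nonneg (convex_Ici 1)
    · apply ContinuousOn.sub
      · apply ContinuousOn.div_const
        apply ContinuousOn.sub continuousOn_id
        apply ContinuousOn.div continuousOn_const continuousOn_id
        intro x hx
        simp only [Set.mem_Ici] at hx
        simp only [id]
        intro h; linarith
      · exact fun x hx => (Real.continuousAt_log
          (by simp only [Set.mem_Ici] at hx; positivity)).continuousWithinAt
    · intro x hx
      rw [interior_Ici] at hx
      exact ((hderiv x hx).differentiableAt).differentiableWithinAt
    · intro x hx
      rw [interior_Ici] at hx
      rw [(hderiv x hx).deriv]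
      have hx0 : (0:ℝ) < x := lt_trans one_pos hx
      have heq : (1 - (0*x - 1*1)/x^2)/2 - 1/x = (x-1)^2/(2*x^2) := by
        field_simp; ring
      rw [heq]; positivity
  have hle := hmono (Set.mem_Ici.mpr le_rfl) (Set.mem_Ici.mpr hs) hs
  have hval : f 1 = 0 := by simp [hf]
  rw [hval] at hle
  simp only [hf, sub_nonneg] at hle
  exact hle


lemma kl_pointwise {x y : ℝ} (hx : 0 < x) (hy : 0 < y) :
    (x-y)^2/(2*max x y) ≤ x*(Real.log x - Real.log y) - x + y := by
  rcases le_total y x with h | h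
  · rw [max_eq_left h]
    have ht : 1 ≤ x/y := (one_le_div hy).mpr h
    have hlog := log_ge_aux ht
    have hdiv : Real.log (x/y) = Real.log x - Real.log y := Real.log_div (ne_of_gt hx) (ne_of_gt hy)
    have harg : 2*(x/y-1)/(x/y+1) = 2*(x-y)/(x+y) := by
      rw [div_eq_div_iff (by positivity) (by positivity)]
      field_simp
    rw [hdiv, harg] at hlog
    have h1 : 2*x*(x-y)/(x+y) ≤ x*(Real.log x - Real.log y) := by
      have := mul_le_mul_of_nonneg_left hlog (le_of_lt hx)
      calc 2*x*(x-y)/(x+y) = x*(2*(x-y)/(x+y)) := by ring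
        _ ≤ x*(Real.log x - Real.log y) := this
    have h2 : (x-y)^2/(2*x) ≤ 2*x*(x-y)/(x+y) - x + y := by
      rw [div_le_iff₀ (by positivity)]
      have : (2*x*(x-y)/(x+y) - x + y)*(2*x) = (2*x*(x-y) - (x-y)*(x+y))*(2*x)/(x+y) := by
        field_simp; ring
      rw [this, le_div_iff₀ (by positivity)]
      nlinarith [sq_nonneg (x-y), mul_nonneg (mul_nonneg (sub_nonneg.mpr h) (sub_nonneg.mpr h)) (sub_nonneg.mpr h)]
    linarith
  · rw [max_eq_right h]
    have hs : 1 ≤ y/x := (one_le_div hx).mpr h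
    have hlog := log_le_aux hs
    have hdiv : Real.log (y/x) = Real.log y - Real.log x := Real.log_div (ne_of_gt hy) (ne_of_gt hx)
    have harg : (y/x - 1/(y/x))/2 = (y^2-x^2)/(2*x*y) := by
      rw [div_eq_div_iff (by norm_num) (by positivity)]
      field_simp
    rw [hdiv, harg] at hlog
    have h1 : -((y^2-x^2)/(2*y)) ≤ x*(Real.log x - Real.log y) := by
      have := mul_le_mul_of_nonneg_left hlog (le_of_lt hx)
      have heq : x*((y^2-x^2)/(2*x*y)) = (y^2-x^2)/(2*y) := by field_simp
      nlinarith [this]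
    have h2 : (x-y)^2/(2*y) = -((y^2-x^2)/(2*y)) - x + y := by
      field_simp; ring
    linarith


lemma kl_pinsker {n : ℕ} {p q : Fin n → ℝ} (hp : ∀ i, 0 < p i) (hq : ∀ i, 0 < q i)
    (hps : ∑ i, p i = 1) (hqs : ∑ i, q i = 1) :
    (∑ i, |q i - p i|)^2/4 ≤ ∑ i, q i * (Real.log (q i) - Real.log (p i)) := by
  set D := ∑ i, q i * (Real.log (q i) - Real.log (p i)) with hD
  have hsum : ∑ i, (q i - p i)^2/(2*max (q i) (p i)) ≤ D := by
    have h1 : ∑ i, (q i - p i)^2/(2*max (q i) (p i)) ≤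
        ∑ i, (q i * (Real.log (q i) - Real.log (p i)) - q i + p i) :=
      Finset.sum_le_sum (fun i _ => kl_pointwise (hq i) (hp i))
    have h2 : ∑ i, (q i * (Real.log (q i) - Real.log (p i)) - q i + p i) = D := by
      rw [hD]
      rw [Finset.sum_add_distrib, Finset.sum_sub_distrib, hps, hqs]
      ring
    linarith
  have hmax : ∑ i, 2*max (q i) (p i) ≤ 4 := by
    have : ∀ i, 2*max (q i) (p i) ≤ 2*(q i + p i) := by
      intro i
      have := max_le_add_of_nonneg (le_of_lt (hq i)) (le_of_lt (hp i))
      linarith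
    calc ∑ i, 2*max (q i) (p i) ≤ ∑ i, 2*(q i + p i) := Finset.sum_le_sum (fun i _ => this i)
      _ = 4 := by rw [← Finset.mul_sum, Finset.sum_add_distrib, hps, hqs]; norm_num
  have hcs := Finset.sum_mul_sq_le_sq_mul_sq Finset.univ
    (fun i => |q i - p i| / Real.sqrt (2*max (q i) (p i)))
    (fun i => Real.sqrt (2*max (q i) (p i)))
  have hpos : ∀ i : Fin n, (0:ℝ) < 2*max (q i) (p i) := by
    intro i
    have := hq i
    have := le_max_left (q i) (p i)
    linarith
  have heq1 : ∀ i : Fin n, |q i - p i| / Real.sqrt (2*max (q i) (p i)) *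
      Real.sqrt (2*max (q i) (p i)) = |q i - p i| := by
    intro i
    rw [div_mul_cancel₀]
    exact ne_of_gt (Real.sqrt_pos.mpr (hpos i))
  have heq2 : ∀ i : Fin n, (|q i - p i| / Real.sqrt (2*max (q i) (p i)))^2 =
      (q i - p i)^2/(2*max (q i) (p i)) := by
    intro i
    rw [div_pow, sq_abs, Real.sq_sqrt (le_of_lt (hpos i))]
  have heq3 : ∀ i : Fin n, (Real.sqrt (2*max (q i) (p i)))^2 = 2*max (q i) (p i) :=
    fun i => Real.sq_sqrt (le_of_lt (hpos i))
  simp only [heq1] at hcs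
  rw [Finset.sum_congr rfl (fun i _ => heq2 i), Finset.sum_congr rfl (fun i _ => heq3 i)] at hcs
  have hnn : (0:ℝ) ≤ ∑ i, (q i - p i)^2/(2*max (q i) (p i)) :=
    Finset.sum_nonneg (fun i _ => div_nonneg (sq_nonneg _) (le_of_lt (hpos i)))
  calc (∑ i, |q i - p i|)^2/4 ≤ ((∑ i, (q i - p i)^2/(2*max (q i) (p i))) *
        (∑ i, 2*max (q i) (p i)))/4 := by
        apply div_le_div_of_nonneg_right hcs; norm_num
    _ ≤ (D * 4)/4 := by
        apply div_le_div_of_nonneg_right _ (by norm_num)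
        apply mul_le_mul hsum hmax (Finset.sum_nonneg (fun i _ => le_of_lt (hpos i))) (le_trans hnn hsum)
    _ = D := by ring

lemma kl_nonneg {n : ℕ} {p q : Fin n → ℝ} (hp : ∀ i, 0 < p i) (hq : ∀ i, 0 < q i)
    (hps : ∑ i, p i = 1) (hqs : ∑ i, q i = 1) :
    0 ≤ ∑ i, q i * (Real.log (q i) - Real.log (p i)) :=
  le_trans (by positivity) (kl_pinsker hp hq hps hqs)


lemma kl_lip_one {μ x y v : ℝ} (hμ : 0 < μ) (hx1 : x ≤ 1) (hy : μ ≤ y)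
    (hv : μ ≤ v) (hv1 : v ≤ 1) (hxy : y ≤ x) :
    |x*(Real.log x - Real.log v) - y*(Real.log y - Real.log v)| ≤
      (1 + Real.log (1/μ)) * (x - y) := by
  have hy0 : 0 < y := lt_of_lt_of_le hμ hy
  have hx0 : 0 < x := lt_of_lt_of_le hy0 hxy
  have hv0 : 0 < v := lt_of_lt_of_le hμ hv
  have hL : Real.log (1/μ) = -Real.log μ := by rw [one_div, Real.log_inv]
  have hlogx : Real.log x ≤ 0 := Real.log_nonpos (le_of_lt hx0) hx1
  have hlogv : Real.log v ≤ 0 := Real.log_nonpos (le_of_lt hv0) hv1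
  have hlogxμ : Real.log μ ≤ Real.log x := Real.log_le_log hμ (le_trans hy hxy)
  have hlogvμ : Real.log μ ≤ Real.log v := Real.log_le_log hμ hv
  have hxyle : Real.log x - Real.log y ≤ x/y - 1 := by
    have := Real.log_le_sub_one_of_pos (show 0 < x/y by positivity)
    rwa [Real.log_div (ne_of_gt hx0) (ne_of_gt hy0)] at this
  have hxyge : 0 ≤ Real.log x - Real.log y := sub_nonneg.mpr (Real.log_le_log hy0 hxy)
  have key : x*(Real.log x - Real.log v) - y*(Real.log y - Real.log v)
      = (x-y)*Real.log x + y*(Real.log x - Real.log y) - (x-y)*Real.log v := by ring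
  rw [abs_le]
  constructor
  · -- lower bound
    rw [key]
    have h1 : -(x-y)*Real.log (1/μ) ≤ (x-y)*Real.log x := by
      rw [hL]
      nlinarith [sub_nonneg.mpr hxy]
    have h2 : (0:ℝ) ≤ y*(Real.log x - Real.log y) := by positivity
    have h3 : (0:ℝ) ≤ -(x-y)*Real.log v := by nlinarith [sub_nonneg.mpr hxy]
    nlinarith [sub_nonneg.mpr hxy]
  · rw [key]
    have h1 : (x-y)*Real.log x ≤ 0 := by nlinarith [sub_nonneg.mpr hxy]
    have h2 : y*(Real.log x - Real.log y) ≤ x - y := by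
      have := mul_le_mul_of_nonneg_left hxyle (le_of_lt hy0)
      calc y*(Real.log x - Real.log y) ≤ y*(x/y-1) := this
        _ = x - y := by field_simp
    have h3 : -((x-y)*Real.log v) ≤ (x-y)*Real.log (1/μ) := by
      rw [hL]; nlinarith [sub_nonneg.mpr hxy]
    nlinarith [sub_nonneg.mpr hxy]

lemma kl_lip {μ x y v : ℝ} (hμ : 0 < μ) (hx : μ ≤ x) (hx1 : x ≤ 1) (hy : μ ≤ y)
    (hy1 : y ≤ 1) (hv : μ ≤ v) (hv1 : v ≤ 1) :
    |x*(Real.log x - Real.log v) - y*(Real.log y - Real.log v)| ≤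
      (1 + Real.log (1/μ)) * |x - y| := by
  rcases le_total y x with h | h
  · rw [abs_of_nonneg (sub_nonneg.mpr h)]
    exact kl_lip_one hμ hx1 hy hv hv1 h
  · rw [abs_of_nonpos (sub_nonpos.mpr h), abs_sub_comm]
    have := kl_lip_one hμ hy1 hx hv hv1 h
    convert this using 2 <;> ring

lemma entry_le_one {n : ℕ} {μ : ℝ} (hμ : 0 < μ) {x : Fin n → ℝ}
    (hx : ∀ i, μ ≤ x i) (hs : ∑ i, x i = 1) (i : Fin n) : x i ≤ 1 := by
  rw [← hs]
  exact Finset.single_le_sum (fun j _ => le_of_lt (lt_of_lt_of_le hμ (hx j)))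
    (Finset.mem_univ i)

lemma kl_init {n : ℕ} (hn : 1 ≤ n) {μ : ℝ} (hμ : 0 < μ) (hμn : μ < 1/n)
    {u : Fin n → ℝ} (hu : ∀ i, μ ≤ u i) (hus : ∑ i, u i = 1) :
    ∑ i, u i * (Real.log (u i) - Real.log (1/n)) ≤ Real.log (1/μ) := by
  have hn0 : (0:ℝ) < n := by exact_mod_cast hn
  have h1 : ∀ i : Fin n, u i * (Real.log (u i) - Real.log (1/(n:ℝ))) ≤ u i * (0 - Real.log (1/(n:ℝ))) := by
    intro i
    apply mul_le_mul_of_nonneg_left _ (le_of_lt (lt_of_lt_of_le hμ (hu i)))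
    have := Real.log_nonpos (le_of_lt (lt_of_lt_of_le hμ (hu i))) (entry_le_one hμ hu hus i)
    linarith
  calc ∑ i, u i * (Real.log (u i) - Real.log (1/(n:ℝ)))
      ≤ ∑ i, u i * (0 - Real.log (1/(n:ℝ))) := Finset.sum_le_sum (fun i _ => h1 i)
    _ = -Real.log (1/(n:ℝ)) := by
        rw [← Finset.sum_mul, hus]; ring
    _ = Real.log n := by rw [one_div, Real.log_inv]; ring
    _ ≤ Real.log (1/μ) := by
        apply Real.log_le_log hn0
        rw [le_one_div hn0 hμ]
        exact le_of_lt hμn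


lemma foo_step {n : ℕ} {μ η : ℝ} (hμ : 0 < μ) (hη : 0 < η)
    {g p q u : Fin n → ℝ}
    (hp : ∀ i, μ ≤ p i) (hq : ∀ i, μ ≤ q i) (hu : ∀ i, μ ≤ u i)
    (hqs : ∑ i, q i = 1) (hus : ∑ i, u i = 1)
    (hmin : ∀ x : Fin n → ℝ, (∀ i, μ ≤ x i) → ∑ i, x i = 1 →
      η * (∑ i, g i * q i) + ∑ i, q i * Real.log (q i / p i) ≤
      η * (∑ i, g i * x i) + ∑ i, x i * Real.log (x i / p i)) :
    0 ≤ η * (∑ i, g i * (u i - q i)) +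
      ∑ i, (u i - q i) * (Real.log (q i) - Real.log (p i)) := by
  have hq0 : ∀ i, (0:ℝ) < q i := fun i => lt_of_lt_of_le hμ (hq i)
  have hp0 : ∀ i, (0:ℝ) < p i := fun i => lt_of_lt_of_le hμ (hp i)
  -- the smooth objective
  set ψ : ℝ → ℝ := fun l => η * (∑ i, g i * (q i + l*(u i - q i))) +
    ∑ i, ((q i + l*(u i - q i)) * Real.log (q i + l*(u i - q i)) -
      (q i + l*(u i - q i)) * Real.log (p i)) with hψ
  set d : ℝ := η * (∑ i, g i * (u i - q i)) +
    ∑ i, ((Real.log (q i) + 1) * (u i - q i) - (u i - q i) * Real.log (p i)) with hd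
  -- ψ has derivative d at 0
  have hderiv : HasDerivAt ψ d 0 := by
    apply HasDerivAt.add
    · -- linear part
      have : HasDerivAt (fun l : ℝ => ∑ i, g i * (q i + l*(u i - q i)))
          (∑ i, g i * (u i - q i)) 0 := by
        apply HasDerivAt.fun_sum
        intro i _
        have hx : HasDerivAt (fun l : ℝ => q i + l*(u i - q i)) (u i - q i) 0 := by
          simpa using ((hasDerivAt_id (0:ℝ)).mul_const (u i - q i)).const_add (q i)
        exact hx.const_mul (g i)
      exact this.const_mul η
    · apply HasDerivAt.fun_sum
      intro i _
      have hx : HasDerivAt (fun l : ℝ => q i + l*(u i - q i)) (u i - q i) 0 := by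
        simpa using ((hasDerivAt_id (0:ℝ)).mul_const (u i - q i)).const_add (q i)
      have h0 : q i + (0:ℝ)*(u i - q i) = q i := by ring
      have hml : HasDerivAt (fun y : ℝ => y * Real.log y) (Real.log (q i) + 1) (q i) :=
        Real.hasDerivAt_mul_log (ne_of_gt (hq0 i))
      have hcomp : HasDerivAt (fun l : ℝ => (q i + l*(u i - q i)) * Real.log (q i + l*(u i - q i)))
          ((Real.log (q i) + 1) * (u i - q i)) 0 := by
        have := HasDerivAt.comp (0:ℝ) (h0 ▸ hml) hx
        exact this.congr_deriv (by rw [h0])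
      exact hcomp.sub (hx.mul_const (Real.log (p i)))
  -- ψ l ≥ ψ 0 for l ∈ (0,1)
  have hmin' : ∀ l ∈ Set.Ioo (0:ℝ) 1, ψ 0 ≤ ψ l := by
    intro l hl
    obtain ⟨hl0, hl1⟩ := hl
    set x : Fin n → ℝ := fun i => q i + l*(u i - q i) with hxdef
    have hxμ : ∀ i, μ ≤ x i := by
      intro i
      have : x i = (1-l) * q i + l * u i := by rw [hxdef]; ring
      rw [this]
      calc μ = (1-l) * μ + l * μ := by ring
        _ ≤ (1-l) * q i + l * u i := by
            apply add_le_add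
            · exact mul_le_mul_of_nonneg_left (hq i) (by linarith)
            · exact mul_le_mul_of_nonneg_left (hu i) (le_of_lt hl0)
    have hx0 : ∀ i, (0:ℝ) < x i := fun i => lt_of_lt_of_le hμ (hxμ i)
    have hxs : ∑ i, x i = 1 := by
      simp only [hxdef]
      rw [Finset.sum_add_distrib, hqs, ← Finset.mul_sum, Finset.sum_sub_distrib, hqs, hus]
      ring
    have hm := hmin x hxμ hxs
    have conv : ∀ (y : Fin n → ℝ), (∀ i, (0:ℝ) < y i) →
        (∑ i, y i * Real.log (y i / p i)) = ∑ i, (y i * Real.log (y i) - y i * Real.log (p i)) := by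
      intro y hy
      apply Finset.sum_congr rfl
      intro i _
      rw [Real.log_div (ne_of_gt (hy i)) (ne_of_gt (hp0 i))]
      ring
    have hψl : ψ l = η * (∑ i, g i * x i) + ∑ i, x i * Real.log (x i / p i) := by
      rw [hψ]; simp only []
      rw [conv x hx0]
    have hψ0 : ψ 0 = η * (∑ i, g i * q i) + ∑ i, q i * Real.log (q i / p i) := by
      rw [hψ]; simp only []
      have : ∀ i : Fin n, q i + (0:ℝ)*(u i - q i) = q i := fun i => by ring
      simp only [this]
      rw [conv q hq0]
    rw [hψl, hψ0]
    exact hm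
  -- derivative at minimum is nonneg
  have hd0 : 0 ≤ d := by
    have hslope := hasDerivAt_iff_tendsto_slope.mp hderiv
    have hslope' : Filter.Tendsto (slope ψ 0) (nhdsWithin 0 (Set.Ioi 0)) (nhds d) :=
      hslope.mono_left (nhdsWithin_mono 0 (fun x hx => ne_of_gt hx))
    apply ge_of_tendsto hslope'
    filter_upwards [Ioo_mem_nhdsGT_of_mem (Set.mem_Ico.mpr ⟨le_refl (0:ℝ), one_pos⟩)] with l hl
    obtain ⟨hl0, hl1⟩ := hl
    rw [slope_def_field]
    have h := hmin' l ⟨hl0, hl1⟩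
    apply div_nonneg (by linarith) (by linarith)
  -- rewrite d
  have hsz : ∑ i, (u i - q i) = 0 := by
    rw [Finset.sum_sub_distrib, hus, hqs]; ring
  have hrw : d = η * (∑ i, g i * (u i - q i)) +
      (∑ i, (u i - q i) * (Real.log (q i) - Real.log (p i))) + (∑ i, (u i - q i)) := by
    rw [hd, add_assoc, ← Finset.sum_add_distrib]
    congr 1
    apply Finset.sum_congr rfl
    intro i _
    ring
  rw [hrw, hsz, add_zero] at hd0
  exact hd0


lemma step_bound {n : ℕ} {μ η G : ℝ} (hμ : 0 < μ) (hη : 0 < η) (hG : 0 ≤ G)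
    {g p q u : Fin n → ℝ}
    (hp : ∀ i, μ ≤ p i) (hq : ∀ i, μ ≤ q i) (hu : ∀ i, μ ≤ u i)
    (hps : ∑ i, p i = 1) (hqs : ∑ i, q i = 1) (hus : ∑ i, u i = 1)
    (hGb : ∀ i, |g i| ≤ G)
    (hmin : ∀ x : Fin n → ℝ, (∀ i, μ ≤ x i) → ∑ i, x i = 1 →
      η * (∑ i, g i * q i) + ∑ i, q i * Real.log (q i / p i) ≤
      η * (∑ i, g i * x i) + ∑ i, x i * Real.log (x i / p i)) :
    η * (∑ i, g i * (p i - u i)) ≤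
      (∑ i, u i * (Real.log (u i) - Real.log (p i))) -
      (∑ i, u i * (Real.log (u i) - Real.log (q i))) + η^2*G^2 := by
  have hp0 : ∀ i, (0:ℝ) < p i := fun i => lt_of_lt_of_le hμ (hp i)
  have hq0 : ∀ i, (0:ℝ) < q i := fun i => lt_of_lt_of_le hμ (hq i)
  set s : ℝ := ∑ i, |q i - p i| with hs
  have hs0 : 0 ≤ s := Finset.sum_nonneg (fun i _ => abs_nonneg _)
  -- FOO consequence
  have hfoo := foo_step hμ hη hp hq hu hqs hus hmin
  have hdecomp : ∑ i, (u i - q i) * (Real.log (q i) - Real.log (p i)) =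
      ((∑ i, u i * (Real.log (u i) - Real.log (p i))) -
       (∑ i, u i * (Real.log (u i) - Real.log (q i)))) -
      (∑ i, q i * (Real.log (q i) - Real.log (p i))) := by
    rw [← Finset.sum_sub_distrib, ← Finset.sum_sub_distrib]
    apply Finset.sum_congr rfl
    intro i _
    ring
  -- Hölder bound on first part
  have hhold : ∑ i, g i * (p i - q i) ≤ G * s := by
    rw [hs, Finset.mul_sum]
    apply Finset.sum_le_sum
    intro i _
    calc g i * (p i - q i) ≤ |g i * (p i - q i)| := le_abs_self _
      _ = |g i| * |p i - q i| := abs_mul _ _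
      _ ≤ G * |q i - p i| := by
          rw [abs_sub_comm]
          exact mul_le_mul_of_nonneg_right (hGb i) (abs_nonneg _)
  have hpin := kl_pinsker hp0 hq0 hps hqs
  have hsq : η * (G * s) - s^2/4 ≤ η^2*G^2 := by nlinarith [sq_nonneg (s/2 - η*G)]
  have hsplit : η * (∑ i, g i * (p i - u i)) =
      η * (∑ i, g i * (p i - q i)) + η * (∑ i, g i * (q i - u i)) := by
    rw [← mul_add, ← Finset.sum_add_distrib]
    congr 1
    apply Finset.sum_congr rfl
    intro i _
    ring
  have h2 : η * (∑ i, g i * (q i - u i)) ≤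
      ∑ i, (u i - q i) * (Real.log (q i) - Real.log (p i)) := by
    have hneg : ∑ i, g i * (q i - u i) = -(∑ i, g i * (u i - q i)) := by
      rw [← Finset.sum_neg_distrib]
      apply Finset.sum_congr rfl
      intro i _
      ring
    rw [hneg, mul_neg]
    linarith [hfoo]
  have hη' := mul_le_mul_of_nonneg_left hhold (le_of_lt hη)
  rw [hdecomp] at h2
  linarith [hpin, hsq, hsplit, h2, hη']

end EGAux

/-- Dynamic regret bound for projected exponentiated gradient (mirror descent with
negative entropy over the truncated simplex). -/
theorem eg_dynamic_regret (n : ℕ) (hn : 1 ≤ n) (μ : ℝ) (hμ : 0 < μ) (hμn : μ < 1 / n)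
    (η G : ℝ) (hη : 0 < η) (hG : 0 ≤ G) (T : ℕ) (hT : 1 ≤ T)
    (g : ℕ → (Fin n → ℝ) → ℝ) (grad : ℕ → Fin n → ℝ) (w wstar : ℕ → Fin n → ℝ)
    (hw0 : ∀ i, w 0 i = 1 / n)
    (hwmem : ∀ t, (∀ i, μ ≤ w t i) ∧ ∑ i, w t i = 1)
    (hstarmem : ∀ t, (∀ i, μ ≤ wstar t i) ∧ ∑ i, wstar t i = 1)
    (hsub : ∀ t, ∀ x : Fin n → ℝ, (∀ i, μ ≤ x i) → ∑ i, x i = 1 →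
      g t (w t) + ∑ i, grad t i * (x i - w t i) ≤ g t x)
    (hGb : ∀ t i, |grad t i| ≤ G)
    (hupdate : ∀ t, ∀ x : Fin n → ℝ, (∀ i, μ ≤ x i) → ∑ i, x i = 1 →
      η * (∑ i, grad t i * w (t + 1) i) +
          ∑ i, w (t + 1) i * Real.log (w (t + 1) i / w t i) ≤
        η * (∑ i, grad t i * x i) + ∑ i, x i * Real.log (x i / w t i)) :
    (∑ t ∈ Finset.range T, g t (w t)) - (∑ t ∈ Finset.range T, g t (wstar t)) ≤
      (1 + Real.log (1 / μ)) / η *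
          (1 + ∑ t ∈ Finset.range (T - 1), ∑ i, |wstar (t + 1) i - wstar t i|) +
        η * G ^ 2 * T := by
  have hn0 : (0:ℝ) < n := by exact_mod_cast hn
  have hn1 : (1:ℝ) ≤ n := by exact_mod_cast hn
  have hμ1 : μ ≤ 1 := by
    have : 1/(n:ℝ) ≤ 1 := by rw [div_le_one hn0]; exact hn1
    linarith
  have hL0 : 0 ≤ Real.log (1/μ) := Real.log_nonneg (by rw [le_div_iff₀ hμ]; linarith)
  set L : ℝ := 1 + Real.log (1/μ) with hLdef
  have hLpos : 0 < L := by rw [hLdef]; linarith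
  set A : ℕ → ℝ := fun t => ∑ i, wstar t i * (Real.log (wstar t i) - Real.log (w t i)) with hA
  set B : ℕ → ℝ := fun t => ∑ i, wstar t i * (Real.log (wstar t i) - Real.log (w (t+1) i)) with hB
  -- per-step bound
  have hstep : ∀ t, g t (w t) - g t (wstar t) ≤ (A t - B t)/η + η*G^2 := by
    intro t
    have hsb := step_bound (g := grad t) (p := w t) (q := w (t+1)) (u := wstar t)
      hμ hη hG (hwmem t).1 (hwmem (t+1)).1 (hstarmem t).1
      (hwmem t).2 (hwmem (t+1)).2 (hstarmem t).2 (hGb t) (hupdate t)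
    have h1 := hsub t (wstar t) (hstarmem t).1 (hstarmem t).2
    have heq : ∑ i, grad t i * (w t i - wstar t i) =
        -(∑ i, grad t i * (wstar t i - w t i)) := by
      rw [← Finset.sum_neg_distrib]
      apply Finset.sum_congr rfl
      intro i _
      ring
    have h2 : g t (w t) - g t (wstar t) ≤ ∑ i, grad t i * (w t i - wstar t i) := by
      rw [heq]; linarith
    have h3 : (∑ i, grad t i * (w t i - wstar t i)) ≤ (A t - B t + η^2*G^2)/η := by
      rw [le_div_iff₀ hη, mul_comm]
      exact hsb
    have h4 : (A t - B t + η^2*G^2)/η = (A t - B t)/η + η*G^2 := by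
      field_simp
    linarith
  -- telescoping bound
  have htel : ∀ S : ℕ, (∑ t ∈ Finset.range (S+1), (A t - B t)) + B S ≤
      L * (1 + ∑ t ∈ Finset.range S, ∑ i, |wstar (t+1) i - wstar t i|) := by
    intro S
    induction S with
    | zero =>
      simp only [zero_add, Finset.range_one, Finset.sum_singleton, Finset.range_zero,
        Finset.sum_empty, add_zero, mul_one]
      have hA0 : A 0 ≤ Real.log (1/μ) := by
        simp only [hA]
        have : ∀ i : Fin n, wstar 0 i * (Real.log (wstar 0 i) - Real.log (w 0 i)) =
            wstar 0 i * (Real.log (wstar 0 i) - Real.log (1/(n:ℝ))) := by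
          intro i; rw [hw0 i]
        rw [Finset.sum_congr rfl (fun i _ => this i)]
        exact kl_init hn hμ hμn (hstarmem 0).1 (hstarmem 0).2
      rw [hLdef]
      linarith
    | succ S ih =>
      rw [Finset.sum_range_succ (f := fun t => A t - B t), Finset.sum_range_succ
        (f := fun t => ∑ i, |wstar (t+1) i - wstar t i|)]
      have hlip : A (S+1) - B S ≤ L * ∑ i, |wstar (S+1) i - wstar S i| := by
        simp only [hA, hB]
        rw [← Finset.sum_sub_distrib, Finset.mul_sum]
        apply Finset.sum_le_sum
        intro i _
        have hx := (hstarmem (S+1)).1 i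
        have hy := (hstarmem S).1 i
        have hv := (hwmem (S+1)).1 i
        have hx1 := entry_le_one hμ (hstarmem (S+1)).1 (hstarmem (S+1)).2 i
        have hy1 := entry_le_one hμ (hstarmem S).1 (hstarmem S).2 i
        have hv1 := entry_le_one hμ (hwmem (S+1)).1 (hwmem (S+1)).2 i
        calc wstar (S+1) i * (Real.log (wstar (S+1) i) - Real.log (w (S+1) i)) -
              wstar S i * (Real.log (wstar S i) - Real.log (w (S+1) i))
            ≤ |wstar (S+1) i * (Real.log (wstar (S+1) i) - Real.log (w (S+1) i)) -
              wstar S i * (Real.log (wstar S i) - Real.log (w (S+1) i))| := le_abs_self _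
          _ ≤ (1 + Real.log (1/μ)) * |wstar (S+1) i - wstar S i| :=
              kl_lip hμ hx hx1 hy hy1 hv hv1
          _ = L * |wstar (S+1) i - wstar S i| := by rw [hLdef]
      linarith
  -- B is nonnegative
  have hBnn : ∀ t, 0 ≤ B t := by
    intro t
    simp only [hB]
    exact kl_nonneg (fun i => lt_of_lt_of_le hμ ((hwmem (t+1)).1 i))
      (fun i => lt_of_lt_of_le hμ ((hstarmem t).1 i)) (hwmem (t+1)).2 (hstarmem t).2
  -- main assembly
  obtain ⟨S, rfl⟩ : ∃ S, T = S + 1 := ⟨T - 1, (Nat.succ_pred_eq_of_pos hT).symm⟩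
  have hsum1 : (∑ t ∈ Finset.range (S+1), (A t - B t)) ≤
      L * (1 + ∑ t ∈ Finset.range S, ∑ i, |wstar (t+1) i - wstar t i|) := by
    linarith [htel S, hBnn S]
  have hTsub : S + 1 - 1 = S := by omega
  rw [hTsub]
  calc (∑ t ∈ Finset.range (S+1), g t (w t)) - (∑ t ∈ Finset.range (S+1), g t (wstar t))
      = ∑ t ∈ Finset.range (S+1), (g t (w t) - g t (wstar t)) :=
        (Finset.sum_sub_distrib _ _).symm
    _ ≤ ∑ t ∈ Finset.range (S+1), ((A t - B t)/η + η*G^2) :=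
        Finset.sum_le_sum (fun t _ => hstep t)
    _ = (∑ t ∈ Finset.range (S+1), (A t - B t))/η + η*G^2*(S+1) := by
        rw [Finset.sum_add_distrib, ← Finset.sum_div, Finset.sum_const, Finset.card_range,
          nsmul_eq_mul]
        push_cast
        ring
    _ ≤ (L * (1 + ∑ t ∈ Finset.range S, ∑ i, |wstar (t+1) i - wstar t i|))/η
          + η*G^2*(S+1) := by
        gcongr
    _ = (1 + Real.log (1/μ))/η *
          (1 + ∑ t ∈ Finset.range S, ∑ i, |wstar (t+1) i - wstar t i|) + η*G^2*(S+1) := by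
        rw [hLdef, div_mul_eq_mul_div]
    _ = (1 + Real.log (1/μ))/η *
          (1 + ∑ t ∈ Finset.range S, ∑ i, |wstar (t+1) i - wstar t i|) + η*G^2*(S+1:ℕ) := by
        push_cast
        ring
end
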